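/- Ψ(ρ, 0) = π/2 for every ρ > 0, and Ψ(1, Δ) = √2 for every Δ ≥ 2√2; in the latter case the limit function satisfies y_{1,Δ}(w) = 1 − (w + √2)²/2 for w ∈ [−√2, 0]. -/

import Mathlib

open MeasureTheory Set Filter

/-- `x` solves the delay equation `x''(t) + p(t)·x(t − τ(t)) = 0` on `I` in the
Carathéodory sense: `x` is differentiable on `I` and on `I` its derivative is an
indefinite integral of `-p(u)·x(u − τ(u))` (so `x` and its derivative are locally
absolutely continuous there, and the equation holds for a.e. `t ∈ I`). -/
def SolvesDDE (p τ x : ℝ → ℝ) (I : Set ℝ) : Prop :=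
  (∀ t ∈ I, HasDerivAt x (deriv x t) t) ∧
  (∀ t₀ ∈ I, ∀ t ∈ I, deriv x t = deriv x t₀ - ∫ u in t₀..t, p u * x (u - τ u))

/-- `r` is the solution `r_Δ` of `r''(t) + r(t − Δ) = 0`, `t ≥ 0`, with `r ≡ 1` on
`(-∞,0]` and `r'(0) = 0` (the derivative is an indefinite integral of `-r(· - Δ)`). -/
def IsDelayCosine (Δ : ℝ) (r : ℝ → ℝ) : Prop :=
  (∀ t ≤ (0:ℝ), r t = 1) ∧
  (∀ t, 0 ≤ t → HasDerivAt r (deriv r t) t) ∧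
  (∀ t, 0 ≤ t → deriv r t = - ∫ u in (0:ℝ)..t, r (u - Δ))

/-- `θ` is the first zero of `r` on `[0,∞)`. -/
def IsFirstZero (r : ℝ → ℝ) (θ : ℝ) : Prop :=
  0 < θ ∧ r θ = 0 ∧ ∀ t, 0 ≤ t → t < θ → 0 < r t

/-- `g(w) = ρ·r(θ − w − Δ)·χ_{[−Δ,0]}(w)`. -/
noncomputable def gAux (ρ Δ θ : ℝ) (r : ℝ → ℝ) : ℝ → ℝ :=
  (Set.Icc (-Δ) (0:ℝ)).indicator fun w => ρ * r (θ - w - Δ)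

/-- The double integral `∫_{-c}^0 (∫_{-c}^s max (β w) (g w) dw) ds`. -/
noncomputable def doubleInt (g β : ℝ → ℝ) (c : ℝ) : ℝ :=
  ∫ s in (-c)..(0:ℝ), ∫ w in (-c)..s, max (β w) (g w)

/-- The recursively defined sequences `β_n`, `ϖ_n` associated with `g`. -/
def IsBetaSeq (g : ℝ → ℝ) (β : ℕ → ℝ → ℝ) (ϖ : ℕ → ℝ) : Prop :=
  (∀ t ≤ (0:ℝ), β 0 t = 1) ∧
  ∀ n : ℕ,
    (0 < ϖ n ∧ doubleInt g (β n) (ϖ n) = 1) ∧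
    (∀ t, t ≤ -ϖ n → β (n+1) t = 1) ∧
    (∀ t, -ϖ n ≤ t → t ≤ 0 →
      β (n+1) t = 1 - ∫ s in (-ϖ n)..t, ∫ w in (-ϖ n)..s, max (β n w) (g w))

/-- `x` has a locally absolutely continuous derivative on `[a,b]`, with a.e. second
derivative `w`. -/
def HasSecondDerivAEOn (x w : ℝ → ℝ) (a b : ℝ) : Prop :=
  (∀ t ∈ Set.Icc a b, HasDerivAt x (deriv x t) t) ∧
  (∀ t ∈ Set.Icc a b, deriv x t = deriv x a + ∫ u in a..t, w u)

/-!
For `Δ = 0` the function `g` vanishes, so `β_{n+1} = 1 - ∫_{-ϖ_n}^t ∫_{-ϖ_n}^s β_n⁺`. Comparing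
double primitives shows that `β_n` decreases and `ϖ_n` increases with `n` (the difference of two
consecutive steps is concave on `[-ϖ_n, 0]` and nonnegative at both ends). The monotone limit `y`
then solves `y(t) = 1 - ∫_{-Ψ}^t ∫_{-Ψ}^s y`, i.e. `y'' = -y`, `y(-Ψ) = 1`, `y'(-Ψ) = 0`, so
`y(t) = cos (t + Ψ)` on `[-Ψ, 0]`; as `y(0) = 0` and `y ≥ 0` there, `Ψ = π/2`.

For `Δ ≥ 2√2` we have `r_Δ(t) = 1 - t²/2` on `[0, Δ]`, hence `θ_Δ = √2`, `g ≤ 1`, and `g = 1` on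
`[-√2, 0]`. So `max (β_n, g) = 1` on `(-∞, 0]` for every `n`, and the recursion is stationary:
`ϖ_n = √2` and `β_{n+1}(w) = 1 - (w + √2)²/2`.
-/

open intervalIntegral Topology

lemma integral_nonneg_of_monotoneOn {h : ℝ → ℝ} {a t T : ℝ} (hh : MonotoneOn h (Icc a T))
    (htot : 0 ≤ ∫ s in a..T, h s) (ht : t ∈ Icc a T) : 0 ≤ ∫ s in t..T, h s := by
  have hint : ∀ u ∈ Icc a T, ∀ v ∈ Icc a T, IntervalIntegrable h volume u v :=
    fun u hu v hv => (hh.mono (uIcc_subset_Icc hu hv)).intervalIntegrable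
  rcases le_total 0 (h t) with hpos | hneg
  · exact integral_nonneg ht.2 fun s hs =>
      hpos.trans (hh ht ⟨ht.1.trans hs.1, hs.2⟩ hs.1)
  · have hleft : 0 ≤ ∫ s in a..t, -h s := integral_nonneg ht.1 fun s hs =>
      neg_nonneg.2 ((hh ⟨hs.1, hs.2.trans ht.2⟩ ht hs.2).trans hneg)
    have hsplit := integral_add_adjacent_intervals
      (hint a (left_mem_Icc.2 (ht.1.trans ht.2)) t ht)
      (hint t ht T (right_mem_Icc.2 (ht.1.trans ht.2)))
    rw [intervalIntegral.integral_neg] at hleft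
    linarith

noncomputable def doublePrimitive (F : ℝ → ℝ) (a t : ℝ) : ℝ :=
  ∫ s in a..t, ∫ w in a..s, F w

section DoublePrimitive

variable {F G : ℝ → ℝ} {a b t T M : ℝ}

lemma doublePrimitive_self (F : ℝ → ℝ) (a : ℝ) : doublePrimitive F a a = 0 := by
  simp [doublePrimitive]

lemma continuous_doublePrimitive (hF : ∀ u v, IntervalIntegrable F volume u v) (a : ℝ) :
    Continuous (doublePrimitive F a) :=
  continuous_primitive (continuous_primitive hF a).intervalIntegrable a

lemma doublePrimitive_add_integral (hF : Continuous F) (a t T : ℝ) :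
    doublePrimitive F a t + ∫ s in t..T, ∫ w in a..s, F w = doublePrimitive F a T :=
  integral_add_adjacent_intervals
    ((continuous_primitive hF.intervalIntegrable a).intervalIntegrable _ _)
    ((continuous_primitive hF.intervalIntegrable a).intervalIntegrable _ _)

lemma doublePrimitive_eq_add (hF : Continuous F) (a' a t : ℝ) :
    doublePrimitive F a' t =
      doublePrimitive F a' a + (t - a) * (∫ w in a'..a, F w) + doublePrimitive F a t := by
  have hsplit : ∀ s, ∫ w in a'..s, F w = (∫ w in a'..a, F w) + ∫ w in a..s, F w := fun s =>
    (integral_add_adjacent_intervals (hF.intervalIntegrable _ _) (hF.intervalIntegrable _ _)).symm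
  rw [← doublePrimitive_add_integral hF a' a t, integral_congr fun s _ => hsplit s,
    integral_add intervalIntegrable_const
      ((continuous_primitive hF.intervalIntegrable a).intervalIntegrable _ _),
    intervalIntegral.integral_const, smul_eq_mul]
  simp only [doublePrimitive]
  ring

lemma doublePrimitive_nonneg (hF : ∀ w ∈ Icc a t, 0 ≤ F w) (hat : a ≤ t) :
    0 ≤ doublePrimitive F a t :=
  integral_nonneg hat fun _ hs => integral_nonneg hs.1 fun w hw => hF w ⟨hw.1, hw.2.trans hs.2⟩

lemma doublePrimitive_mono (hF : Continuous F) (hG : Continuous G)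
    (hFG : ∀ w ∈ Icc a t, F w ≤ G w) (hat : a ≤ t) :
    doublePrimitive F a t ≤ doublePrimitive G a t :=
  integral_mono_on hat ((continuous_primitive hF.intervalIntegrable a).intervalIntegrable _ _)
    ((continuous_primitive hG.intervalIntegrable a).intervalIntegrable _ _) fun _ hs =>
      integral_mono_on hs.1 (hF.intervalIntegrable _ _) (hG.intervalIntegrable _ _) fun w hw =>
        hFG w ⟨hw.1, hw.2.trans hs.2⟩

lemma doublePrimitive_congr (h : EqOn F G (Icc a t)) (hat : a ≤ t) :
    doublePrimitive F a t = doublePrimitive G a t := by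
  refine integral_congr fun s hs => integral_congr fun w hw => h ?_
  rw [uIcc_of_le hat] at hs
  rw [uIcc_of_le hs.1] at hw
  exact ⟨hw.1, hw.2.trans hs.2⟩

lemma doublePrimitive_of_eqOn_one (h : EqOn F 1 (Icc a t)) (hat : a ≤ t) :
    doublePrimitive F a t = (t - a) ^ 2 / 2 := by
  rw [doublePrimitive_congr h hat]
  simp only [doublePrimitive, Pi.one_apply, intervalIntegral.integral_const, smul_eq_mul, mul_one]
  rw [integral_sub intervalIntegrable_id intervalIntegrable_const, integral_id,
    intervalIntegral.integral_const, smul_eq_mul]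
  ring

lemma abs_integral_le_of_abs_le (hF : ∀ w, |F w| ≤ M) (a t : ℝ) :
    |∫ w in a..t, F w| ≤ M * |t - a| := by
  simpa only [Real.norm_eq_abs] using
    intervalIntegral.norm_integral_le_of_norm_le_const fun w _ =>
      (Real.norm_eq_abs (F w)).trans_le (hF w)

lemma abs_doublePrimitive_sub_le (hF : Continuous F) (hFM : ∀ w, |F w| ≤ M)
    (ha : b ≤ a) (hat : a ≤ t) :
    |doublePrimitive F b t - doublePrimitive F a t| ≤ M * ((t - b) * (a - b)) := by
  have hM : 0 ≤ M := (abs_nonneg _).trans (hFM 0)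
  have hinner : ‖doublePrimitive F b a‖ ≤ M * (a - b) * |a - b| :=
    intervalIntegral.norm_integral_le_of_norm_le_const fun s hs => by
      rw [uIoc_of_le ha] at hs
      calc ‖∫ w in b..s, F w‖ ≤ M * |s - b| := abs_integral_le_of_abs_le hFM b s
        _ ≤ M * (a - b) := by
          rw [abs_of_nonneg (by linarith [hs.1])]
          exact mul_le_mul_of_nonneg_left (by linarith [hs.2]) hM
  have houter := abs_integral_le_of_abs_le hFM b a
  rw [abs_of_nonneg (sub_nonneg.2 ha)] at houter
  rw [Real.norm_eq_abs, abs_of_nonneg (sub_nonneg.2 ha)] at hinner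
  have hsub : doublePrimitive F b t - doublePrimitive F a t =
      doublePrimitive F b a + (t - a) * (∫ w in b..a, F w) := by
    rw [doublePrimitive_eq_add hF b a t]; ring
  calc |doublePrimitive F b t - doublePrimitive F a t|
      ≤ |doublePrimitive F b a| + (t - a) * |∫ w in b..a, F w| := by
        rw [hsub]
        exact (abs_add_le _ _).trans_eq (by rw [abs_mul, abs_of_nonneg (sub_nonneg.2 hat)])
    _ ≤ M * (a - b) * (a - b) + (t - a) * (M * (a - b)) := by
        gcongr
    _ ≤ M * ((t - b) * (a - b)) := by nlinarith [mul_nonneg hM (sub_nonneg.2 ha)]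

lemma tendsto_doublePrimitive_of_tendsto {F : ℕ → ℝ → ℝ} {y : ℝ → ℝ}
    (hF : ∀ n, Continuous (F n)) (hFM : ∀ n w, |F n w| ≤ M)
    (hy : ∀ w, Tendsto (fun n => F n w) atTop (𝓝 (y w))) (a t : ℝ) :
    Tendsto (fun n => doublePrimitive (F n) a t) atTop (𝓝 (doublePrimitive y a t)) := by
  have hinner : ∀ s, Tendsto (fun n => ∫ w in a..s, F n w) atTop (𝓝 (∫ w in a..s, y w)) :=
    fun s => tendsto_integral_filter_of_dominated_convergence (fun _ => M)
      (.of_forall fun n => (hF n).aestronglyMeasurable)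
      (.of_forall fun n => ae_of_all _ fun w _ => hFM n w)
      intervalIntegrable_const (ae_of_all _ fun w _ => hy w)
  refine tendsto_integral_filter_of_dominated_convergence (fun _ => M * |t - a|)
    (.of_forall fun n => (continuous_primitive (hF n).intervalIntegrable a).aestronglyMeasurable)
    (.of_forall fun n => ae_of_all _ fun s hs => ?_) intervalIntegrable_const
    (ae_of_all _ fun s _ => hinner s)
  refine (abs_integral_le_of_abs_le (hFM n) a s).trans
    (mul_le_mul_of_nonneg_left ?_ ((abs_nonneg _).trans (hFM n 0)))
  rcases le_total a t with hat | hta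
  · rw [uIoc_of_le hat] at hs
    rw [abs_of_nonneg (by linarith [hs.1]), abs_of_nonneg (by linarith)]
    linarith [hs.2]
  · rw [uIoc_of_ge hta] at hs
    rw [abs_of_nonpos (by linarith [hs.2]), abs_of_nonpos (by linarith)]
    linarith [hs.1]

lemma tendsto_doublePrimitive {F : ℕ → ℝ → ℝ} {y : ℝ → ℝ} {c : ℕ → ℝ}
    (hF : ∀ n, Continuous (F n)) (hFM : ∀ n w, |F n w| ≤ M)
    (hy : ∀ w, Tendsto (fun n => F n w) atTop (𝓝 (y w)))
    (hc : Tendsto c atTop (𝓝 a)) (hca : ∀ n, a ≤ c n) (hat : a < t) :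
    Tendsto (fun n => doublePrimitive (F n) (c n) t) atTop (𝓝 (doublePrimitive y a t)) := by
  have hgap : Tendsto (fun n => M * ((t - a) * (c n - a))) atTop (𝓝 0) := by
    simpa using ((hc.sub_const a).const_mul (t - a)).const_mul M
  have hdiff : Tendsto (fun n => doublePrimitive (F n) a t - doublePrimitive (F n) (c n) t)
      atTop (𝓝 0) := by
    refine squeeze_zero_norm' ?_ hgap
    filter_upwards [hc.eventually (eventually_le_nhds hat)] with n hn
    exact abs_doublePrimitive_sub_le (hF n) (hFM n) (hca n) hn
  simpa using (tendsto_doublePrimitive_of_tendsto hF hFM hy a t).sub hdiff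

lemma le_of_doublePrimitive_eq (hF : Continuous F) (hG : Continuous G)
    (hGF : ∀ w ≤ T, G w ≤ F w) (hGpos : ∀ w < T, 0 < G w) (hbT : b < T)
    (heq : doublePrimitive F a T = doublePrimitive G b T) : b ≤ a := by
  by_contra! hab
  have hgap : 0 < ∫ w in a..b, G w := intervalIntegral_pos_of_pos_on (hG.intervalIntegrable _ _)
    (fun w hw => hGpos w (hw.2.trans hbT)) hab
  have hhead : 0 ≤ doublePrimitive G a b :=
    doublePrimitive_nonneg (fun w hw => (hGpos w (hw.2.trans_lt hbT)).le) hab.le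
  have hmono : doublePrimitive G a T ≤ doublePrimitive F a T :=
    doublePrimitive_mono hG hF (fun w hw => hGF w hw.2) (hab.trans hbT).le
  have hsplit := doublePrimitive_eq_add hG a b T
  nlinarith [mul_pos (sub_pos.2 hbT) hgap]

lemma doublePrimitive_le_of_eq (hF : Continuous F) (hG : Continuous G)
    (hGF : ∀ w ∈ Icc a T, G w ≤ F w) (hG0 : ∀ w ∈ Icc b a, 0 ≤ G w) (hba : b ≤ a)
    (heq : doublePrimitive F a T = doublePrimitive G b T) (ht : t ∈ Icc a T) :
    doublePrimitive F a t ≤ doublePrimitive G b t := by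
  -- `h` is monotone as `G ≤ F`, and `∫ s in a..T, h s = doublePrimitive G b a ≥ 0`.
  set h := fun s => (∫ w in a..s, F w) - ∫ w in b..s, G w
  have hF' : Continuous fun s => ∫ w in a..s, F w := continuous_primitive hF.intervalIntegrable a
  have hG' : Continuous fun s => ∫ w in b..s, G w := continuous_primitive hG.intervalIntegrable b
  have hmono : MonotoneOn h (Icc a T) := by
    intro s hs s' hs' hss'
    have hsplitF := integral_add_adjacent_intervals (μ := volume)
      (hF.intervalIntegrable a s) (hF.intervalIntegrable s s')
    have hsplitG := integral_add_adjacent_intervals (μ := volume)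
      (hG.intervalIntegrable b s) (hG.intervalIntegrable s s')
    have hGF' : ∫ w in s..s', G w ≤ ∫ w in s..s', F w :=
      integral_mono_on hss' (hG.intervalIntegrable _ _) (hF.intervalIntegrable _ _)
        fun w hw => hGF w ⟨hs.1.trans hw.1, hw.2.trans hs'.2⟩
    simp only [h]
    linarith
  have htot : 0 ≤ ∫ s in a..T, h s := by
    have hhead : 0 ≤ doublePrimitive G b a := doublePrimitive_nonneg hG0 hba
    have hGsplit := doublePrimitive_add_integral hG b a T
    rw [integral_sub (hF'.intervalIntegrable _ _) (hG'.intervalIntegrable _ _)]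
    change 0 ≤ doublePrimitive F a T - _
    linarith
  have htail := integral_nonneg_of_monotoneOn hmono htot ht
  rw [integral_sub (hF'.intervalIntegrable _ _) (hG'.intervalIntegrable _ _)] at htail
  linarith [doublePrimitive_add_integral hF a t T, doublePrimitive_add_integral hG b t T]


end DoublePrimitive

lemma eq_zero_of_hasDerivAt_oscillator {u v : ℝ → ℝ} {a b : ℝ}
    (hu : ∀ x ∈ Icc a b, HasDerivAt u (-v x) x) (hv : ∀ x ∈ Icc a b, HasDerivAt v (u x) x)
    (hua : u a = 0) (hva : v a = 0) : ∀ x ∈ Icc a b, u x = 0 := by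
  have hE : ∀ x ∈ Icc a b, HasDerivAt (fun x => u x ^ 2 + v x ^ 2) 0 x := fun x hx => by
    refine (((hu x hx).pow 2).add ((hv x hx).pow 2)).congr_deriv ?_
    push_cast
    ring
  have hconst := constant_of_has_deriv_right_zero
    (fun x hx => (hE x hx).continuousAt.continuousWithinAt)
    (fun x hx => (hE x (Ico_subset_Icc_self hx)).hasDerivWithinAt)
  intro x hx
  have := hconst x hx
  simp only [hua, hva] at this
  nlinarith [sq_nonneg (u x), sq_nonneg (v x)]

lemma eq_cos_of_eq_one_sub_doublePrimitive {y : ℝ → ℝ} {a b : ℝ}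
    (hy : ∀ u v, IntervalIntegrable y volume u v)
    (h : ∀ t ∈ Icc a b, y t = 1 - doublePrimitive y a t) :
    ∀ t ∈ Icc a b, y t = Real.cos (t - a) := by
  -- `y` need not be differentiable; `Y` agrees with it on `[a, b]` and is `C¹` on all of `ℝ`.
  set Y := fun t => 1 - doublePrimitive y a t
  have hYc : Continuous Y := continuous_const.sub (continuous_doublePrimitive hy a)
  have hJc : Continuous fun s => ∫ w in a..s, y w := continuous_primitive hy a
  have hY : ∀ x, HasDerivAt Y (-∫ w in a..x, y w) x := fun x =>
    ((hJc.integral_hasStrictDerivAt a x).hasDerivAt).const_sub 1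
  have hK : ∀ x, HasDerivAt (fun s => ∫ w in a..s, Y w) (Y x) x := fun x =>
    (hYc.integral_hasStrictDerivAt a x).hasDerivAt
  have hJK : ∀ x ∈ Icc a b, ∫ w in a..x, y w = ∫ w in a..x, Y w := fun x hx =>
    integral_congr fun w hw => by
      rw [uIcc_of_le hx.1] at hw
      exact h w ⟨hw.1, hw.2.trans hx.2⟩
  have hcos : ∀ x, HasDerivAt (fun s => Real.cos (s - a)) (-Real.sin (x - a)) x := fun x =>
    (Real.hasDerivAt_cos (x - a)).comp_sub_const x a
  have hsin : ∀ x, HasDerivAt (fun s => Real.sin (s - a)) (Real.cos (x - a)) x := fun x =>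
    (Real.hasDerivAt_sin (x - a)).comp_sub_const x a
  have hzero := eq_zero_of_hasDerivAt_oscillator (a := a) (b := b)
    (u := fun s => Y s - Real.cos (s - a))
    (v := fun s => (∫ w in a..s, Y w) - Real.sin (s - a))
    (fun x hx => ((hY x).sub (hcos x)).congr_deriv (by rw [hJK x hx]; ring))
    (fun x _ => (hK x).sub (hsin x)) (by simp [Y, doublePrimitive_self]) (by simp)
  intro t ht
  rw [h t ht]
  linarith [hzero t ht]

lemma eq_pi_div_two_of_cos_eq_zero {Ψ : ℝ} (hΨ : 0 < Ψ) (hcos : Real.cos Ψ = 0)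
    (hnonneg : ∀ x ∈ Icc 0 Ψ, 0 ≤ Real.cos x) : Ψ = Real.pi / 2 := by
  have hpi := Real.pi_pos
  rcases lt_trichotomy Ψ (Real.pi / 2) with hlt | heq | hgt
  · linarith [Real.cos_pos_of_mem_Ioo ⟨by linarith, hlt⟩]
  · exact heq
  · have hneg : Real.cos (min Ψ Real.pi) < 0 :=
      Real.cos_neg_of_pi_div_two_lt_of_lt (lt_min hgt (by linarith))
        ((min_le_right _ _).trans_lt (by linarith))
    linarith [hnonneg (min Ψ Real.pi) ⟨le_min hΨ.le hpi.le, min_le_left _ _⟩]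

-- `β n` is only pinned down on `(-∞, 0]`; freezing it at `0` makes every integrand continuous.
def extendNonpos (f : ℝ → ℝ) (t : ℝ) : ℝ := f (min t 0)

lemma extendNonpos_of_nonpos (f : ℝ → ℝ) {t : ℝ} (ht : t ≤ 0) : extendNonpos f t = f t := by
  rw [extendNonpos, min_eq_left ht]

structure IsAdmissible (f : ℝ → ℝ) : Prop where
  continuous_extendNonpos : Continuous (extendNonpos f)
  nonneg : ∀ t ≤ 0, 0 ≤ f t
  le_one : ∀ t ≤ 0, f t ≤ 1
  pos : ∀ t < 0, 0 < f t

namespace IsAdmissible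

variable {f : ℝ → ℝ}

lemma extendNonpos_nonneg (hf : IsAdmissible f) (t : ℝ) : 0 ≤ extendNonpos f t :=
  hf.nonneg _ (min_le_right _ _)

lemma abs_extendNonpos_le_one (hf : IsAdmissible f) (t : ℝ) : |extendNonpos f t| ≤ 1 := by
  rw [abs_of_nonneg (hf.extendNonpos_nonneg t)]
  exact hf.le_one _ (min_le_right _ _)

lemma extendNonpos_pos (hf : IsAdmissible f) {t : ℝ} (ht : t < 0) : 0 < extendNonpos f t := by
  rw [extendNonpos_of_nonpos f ht.le]
  exact hf.pos t ht

end IsAdmissible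

namespace IsBetaSeq

variable {β : ℕ → ℝ → ℝ} {ϖ : ℕ → ℝ} {n : ℕ} {Ψ : ℝ}

lemma eq_one_sub_doublePrimitive (h : IsBetaSeq 0 β ϖ) (hn : ∀ t ≤ 0, 0 ≤ β n t) :
    doublePrimitive (extendNonpos (β n)) (-ϖ n) 0 = 1 ∧
      ∀ t ∈ Icc (-ϖ n) 0, β (n + 1) t = 1 - doublePrimitive (extendNonpos (β n)) (-ϖ n) t := by
  have hcongr : ∀ t ∈ Icc (-ϖ n) 0,
      doublePrimitive (fun w => max (β n w) ((0 : ℝ → ℝ) w)) (-ϖ n) t =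
        doublePrimitive (extendNonpos (β n)) (-ϖ n) t := fun t ht =>
    doublePrimitive_congr (fun w hw => by
      rw [Pi.zero_apply, extendNonpos_of_nonpos _ (hw.2.trans ht.2),
        max_eq_left (hn w (hw.2.trans ht.2))]) ht.1
  have hϖ := (h.2 n).1
  refine ⟨?_, fun t ht => ?_⟩
  · rw [← hcongr 0 ⟨by linarith, le_rfl⟩]
    exact hϖ.2
  · rw [← hcongr t ht]
    exact (h.2 n).2.2 t ht.1 ht.2

lemma isAdmissible_succ (h : IsBetaSeq 0 β ϖ) (hn : IsAdmissible (β n)) :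
    IsAdmissible (β (n + 1)) := by
  set F := extendNonpos (β n)
  set a := -ϖ n
  obtain ⟨hone, hformula⟩ := h.eq_one_sub_doublePrimitive hn.nonneg
  have hleft : ∀ t ≤ a, β (n + 1) t = 1 := (h.2 n).2.1
  have hFc : Continuous F := hn.continuous_extendNonpos
  have htail : ∀ t ∈ Icc a 0, β (n + 1) t = ∫ s in t..0, ∫ w in a..s, F w := fun t ht => by
    rw [hformula t ht, ← hone, ← doublePrimitive_add_integral hFc a t 0]
    ring
  have hEpos : ∀ s ∈ Ioc a 0, 0 < ∫ w in a..s, F w := fun s hs =>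
    intervalIntegral_pos_of_pos_on (hFc.intervalIntegrable _ _)
      (fun w hw => hn.extendNonpos_pos (hw.2.trans_le hs.2)) hs.1
  refine ⟨?_, fun t ht => ?_, fun t ht => ?_, fun t ht => ?_⟩
  · have hext :
        extendNonpos (β (n + 1)) = fun t => 1 - doublePrimitive F a (max (min t 0) a) := by
      funext t
      rcases le_total (min t 0) a with hta | hat
      · rw [max_eq_right hta, doublePrimitive_self, extendNonpos, hleft _ hta, sub_zero]
      · rw [max_eq_left hat, extendNonpos, hformula _ ⟨hat, min_le_right _ _⟩]
    rw [hext]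
    exact continuous_const.sub ((continuous_doublePrimitive hFc.intervalIntegrable a).comp
      ((continuous_id.min continuous_const).max continuous_const))
  · rcases le_total t a with hta | hat
    · rw [hleft t hta]; exact zero_le_one
    · rw [htail t ⟨hat, ht⟩]
      exact integral_nonneg ht fun s hs =>
        integral_nonneg (hat.trans hs.1) fun w _ => hn.extendNonpos_nonneg w
  · rcases le_total t a with hta | hat
    · rw [hleft t hta]
    · rw [hformula t ⟨hat, ht⟩, sub_le_self_iff]
      exact doublePrimitive_nonneg (fun w _ => hn.extendNonpos_nonneg w) hat
  · rcases le_or_gt t a with hta | hat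
    · rw [hleft t hta]; exact zero_lt_one
    · rw [htail t ⟨hat.le, ht.le⟩]
      exact intervalIntegral_pos_of_pos_on
        ((continuous_primitive hFc.intervalIntegrable a).intervalIntegrable _ _)
        (fun s hs => hEpos s ⟨hat.trans hs.1, hs.2.le⟩) ht

lemma isAdmissible (h : IsBetaSeq 0 β ϖ) : ∀ n, IsAdmissible (β n)
  | 0 => by
    have hext : extendNonpos (β 0) = fun _ => 1 := funext fun t => h.1 _ (min_le_right t 0)
    refine ⟨hext ▸ continuous_const, fun t ht => ?_, fun t ht => ?_, fun t ht => ?_⟩ <;>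
      simp [h.1 t (by linarith)]
  | n + 1 => h.isAdmissible_succ (h.isAdmissible n)

lemma varpi_le_succ (h : IsBetaSeq 0 β ϖ) (hle : ∀ t ≤ 0, β (n + 1) t ≤ β n t) :
    ϖ n ≤ ϖ (n + 1) := by
  have hb := h.isAdmissible
  have := le_of_doublePrimitive_eq (hb n).continuous_extendNonpos
    (hb (n + 1)).continuous_extendNonpos
    (fun w hw => by
      simpa only [extendNonpos_of_nonpos _ hw] using hle w hw)
    (fun w hw => (hb (n + 1)).extendNonpos_pos hw) (neg_lt_zero.2 (h.2 (n + 1)).1.1)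
    ((h.eq_one_sub_doublePrimitive (hb n).nonneg).1.trans
      (h.eq_one_sub_doublePrimitive (hb (n + 1)).nonneg).1.symm)
  linarith

lemma succ_succ_le (h : IsBetaSeq 0 β ϖ) (hle : ∀ t ≤ 0, β (n + 1) t ≤ β n t)
    (hϖ : ϖ n ≤ ϖ (n + 1)) : ∀ t ≤ 0, β (n + 2) t ≤ β (n + 1) t := by
  have hb := h.isAdmissible
  obtain ⟨hone, hformula⟩ := h.eq_one_sub_doublePrimitive (hb n).nonneg
  obtain ⟨hone', hformula'⟩ := h.eq_one_sub_doublePrimitive (hb (n + 1)).nonneg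
  intro t ht
  rcases le_total t (-ϖ n) with hta | hat
  · rw [(h.2 n).2.1 t hta]
    exact (hb (n + 2)).le_one t ht
  · rw [hformula t ⟨hat, ht⟩, hformula' t ⟨by linarith, ht⟩, sub_le_sub_iff_left]
    exact doublePrimitive_le_of_eq (hb n).continuous_extendNonpos
      (hb (n + 1)).continuous_extendNonpos
      (fun w hw => by simpa only [extendNonpos_of_nonpos _ hw.2] using hle w hw.2)
      (fun w _ => (hb (n + 1)).extendNonpos_nonneg w) (neg_le_neg hϖ) (hone.trans hone'.symm)
      ⟨hat, ht⟩

lemma succ_le (h : IsBetaSeq 0 β ϖ) : ∀ n, ∀ t ≤ 0, β (n + 1) t ≤ β n t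
  | 0 => fun t ht => (h.1 t ht).symm ▸ (h.isAdmissible 1).le_one t ht
  | n + 1 => h.succ_succ_le (h.succ_le n) (h.varpi_le_succ (h.succ_le n))

lemma monotone_varpi (h : IsBetaSeq 0 β ϖ) : Monotone ϖ :=
  monotone_nat_of_le_succ fun n => h.varpi_le_succ (h.succ_le n)

lemma exists_tendsto_extendNonpos (h : IsBetaSeq 0 β ϖ) :
    ∃ y : ℝ → ℝ, ∀ t, Tendsto (fun n => extendNonpos (β n) t) atTop (𝓝 (y t)) :=
  ⟨_, fun t => tendsto_atTop_ciInf
    (antitone_nat_of_succ_le fun n => h.succ_le n _ (min_le_right t 0))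
    ⟨0, by rintro _ ⟨n, rfl⟩; exact (h.isAdmissible n).extendNonpos_nonneg t⟩⟩

lemma limit_eq_one_sub_doublePrimitive (h : IsBetaSeq 0 β ϖ) (hϖ : Tendsto ϖ atTop (𝓝 Ψ))
    {y : ℝ → ℝ} (hy : ∀ t, Tendsto (fun n => extendNonpos (β n) t) atTop (𝓝 (y t))) :
    ∀ t ∈ Icc (-Ψ) 0, y t = 1 - doublePrimitive y (-Ψ) t := by
  have hϖΨ : ∀ n, ϖ n ≤ Ψ := h.monotone_varpi.ge_of_tendsto hϖ
  intro t ht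
  have hsucc : Tendsto (fun n => β (n + 1) t) atTop (𝓝 (y t)) := by
    simpa only [Function.comp_def, extendNonpos_of_nonpos _ ht.2] using
      (hy t).comp (tendsto_add_atTop_nat 1)
  refine tendsto_nhds_unique hsucc ?_
  rcases eq_or_lt_of_le ht.1 with rfl | hlt
  · rw [doublePrimitive_self, sub_zero]
    exact tendsto_const_nhds.congr fun n => ((h.2 n).2.1 _ (neg_le_neg (hϖΨ n))).symm
  · have hb := h.isAdmissible
    have hlim := tendsto_doublePrimitive (fun n => (hb n).continuous_extendNonpos)
      (fun n => (hb n).abs_extendNonpos_le_one) hy hϖ.neg (fun n => neg_le_neg (hϖΨ n)) hlt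
    refine (tendsto_const_nhds.sub hlim).congr' ?_
    filter_upwards [hϖ.neg.eventually (eventually_le_nhds hlt)] with n hn
    exact ((h.eq_one_sub_doublePrimitive (hb n).nonneg).2 t ⟨hn, ht.2⟩).symm

theorem eq_pi_div_two_of_tendsto (h : IsBetaSeq 0 β ϖ) (hϖ : Tendsto ϖ atTop (𝓝 Ψ)) :
    Ψ = Real.pi / 2 := by
  have hb := h.isAdmissible
  obtain ⟨y, hy⟩ := h.exists_tendsto_extendNonpos
  have hΨ : 0 < Ψ := (h.2 0).1.1.trans_le (h.monotone_varpi.ge_of_tendsto hϖ 0)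
  have hy01 : ∀ t, 0 ≤ y t ∧ y t ≤ 1 := fun t =>
    ⟨ge_of_tendsto' (hy t) fun n => (hb n).extendNonpos_nonneg t,
      le_of_tendsto' (hy t) fun n => (abs_le.1 ((hb n).abs_extendNonpos_le_one t)).2⟩
  have hmeas : Measurable y := measurable_of_tendsto_metrizable
    (fun n => (hb n).continuous_extendNonpos.measurable) (tendsto_pi_nhds.2 hy)
  have hint : ∀ u v, IntervalIntegrable y volume u v := fun u v =>
    (intervalIntegrable_const (c := (1 : ℝ))).mono_fun hmeas.aestronglyMeasurable
      (ae_of_all _ fun t => by simp [abs_of_nonneg (hy01 t).1, (hy01 t).2])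
  have hcos := eq_cos_of_eq_one_sub_doublePrimitive hint
    (h.limit_eq_one_sub_doublePrimitive hϖ hy)
  have hy0 : y 0 = 0 := by
    refine tendsto_nhds_unique ((hy 0).comp (tendsto_add_atTop_nat 1))
      (tendsto_const_nhds.congr fun n => ?_)
    obtain ⟨hone, hformula⟩ := h.eq_one_sub_doublePrimitive (hb n).nonneg
    rw [Function.comp_apply, extendNonpos_of_nonpos _ le_rfl,
      hformula 0 ⟨by linarith [(h.2 n).1.1], le_rfl⟩, hone, sub_self]
  refine eq_pi_div_two_of_cos_eq_zero hΨ ?_ fun x hx => ?_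
  · simpa [hy0] using (hcos 0 ⟨by linarith, le_rfl⟩).symm
  · have := hcos (x - Ψ) ⟨by linarith [hx.1], by linarith [hx.2]⟩
    rw [sub_neg_eq_add, sub_add_cancel] at this
    exact this ▸ (hy01 _).1

end IsBetaSeq

namespace IsDelayCosine

variable {Δ : ℝ} {r : ℝ → ℝ}

lemma eq_one_sub_sq_div_two (h : IsDelayCosine Δ r) {t : ℝ} (ht : t ∈ Icc 0 Δ) :
    r t = 1 - t ^ 2 / 2 := by
  have hderiv : ∀ x ∈ Icc 0 Δ, HasDerivAt r (-x) x := fun x hx => by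
    have hint : ∫ u in (0 : ℝ)..x, r (u - Δ) = x := by
      rw [integral_congr (g := fun _ => 1) fun u hu => h.1 _ ?_]
      · simp
      · rw [uIcc_of_le hx.1] at hu
        linarith [hu.2, hx.2]
    simpa [h.2.2 x hx.1, hint] using h.2.1 x hx.1
  have hpoly : ∀ x, HasDerivAt (fun t : ℝ => 1 - t ^ 2 / 2) (-x) x := fun x => by
    simpa using ((hasDerivAt_pow 2 x).div_const 2).const_sub 1
  refine eq_of_has_deriv_right_eq
    (fun x hx => (hderiv x (Ico_subset_Icc_self hx)).hasDerivWithinAt)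
    (fun x _ => (hpoly x).hasDerivWithinAt)
    (fun x hx => (hderiv x hx).continuousAt.continuousWithinAt)
    (fun x _ => (hpoly x).continuousAt.continuousWithinAt) ?_ t ht
  simp [h.1 0 le_rfl]

lemma le_one (h : IsDelayCosine Δ r) {t : ℝ} (ht : t ≤ Δ) : r t ≤ 1 := by
  rcases le_total t 0 with ht0 | ht0
  · exact (h.1 t ht0).le
  · rw [h.eq_one_sub_sq_div_two ⟨ht0, ht⟩]
    linarith [sq_nonneg t]

lemma firstZero_eq_sqrt_two (h : IsDelayCosine Δ r) {θ : ℝ} (hθ : IsFirstZero r θ)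
    (hΔ : Real.sqrt 2 ≤ Δ) : θ = Real.sqrt 2 := by
  have hs : 0 ≤ Real.sqrt 2 := Real.sqrt_nonneg 2
  have hsq : Real.sqrt 2 ^ 2 = 2 := Real.sq_sqrt zero_le_two
  have hθle : θ ≤ Real.sqrt 2 := by
    by_contra! hlt
    have := hθ.2.2 _ hs hlt
    rw [h.eq_one_sub_sq_div_two ⟨hs, hΔ⟩, hsq] at this
    norm_num at this
  have hzero := hθ.2.1
  rw [h.eq_one_sub_sq_div_two ⟨hθ.1.le, hθle.trans hΔ⟩] at hzero
  nlinarith [hθ.1]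

end IsDelayCosine

lemma gAux_zero_delay {ρ θ : ℝ} {r : ℝ → ℝ} (hθ : r θ = 0) : gAux ρ 0 θ r = 0 := by
  funext w
  simp [gAux, hθ]

lemma gAux_one_le_one {Δ θ : ℝ} {r : ℝ → ℝ} (h : IsDelayCosine Δ r) (hθ : θ ≤ Δ) (w : ℝ) :
    gAux 1 Δ θ r w ≤ 1 := by
  unfold gAux
  by_cases hw : w ∈ Icc (-Δ) 0
  · rw [indicator_of_mem hw, one_mul]
    exact h.le_one (by linarith [hw.1])
  · rw [indicator_of_notMem hw]
    exact zero_le_one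

lemma gAux_one_eq_one {Δ θ : ℝ} {r : ℝ → ℝ} (h : IsDelayCosine Δ r) (hθ : 0 ≤ θ) {w : ℝ}
    (hw : w ∈ Icc (θ - Δ) 0) : gAux 1 Δ θ r w = 1 := by
  have hmem : w ∈ Icc (-Δ) 0 := ⟨by linarith [hw.1], hw.2⟩
  rw [gAux, indicator_of_mem hmem, one_mul]
  exact h.1 _ (by linarith [hw.1])

namespace IsBetaSeq

variable {g : ℝ → ℝ} {β : ℕ → ℝ → ℝ} {ϖ : ℕ → ℝ} {n : ℕ}

lemma varpi_eq_of_max_eq_one (h : IsBetaSeq g β ϖ) (hn : ∀ w ≤ 0, max (β n w) (g w) = 1) :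
    ϖ n = Real.sqrt 2 ∧
      ∀ t ∈ Icc (-Real.sqrt 2) 0, β (n + 1) t = 1 - (t + Real.sqrt 2) ^ 2 / 2 := by
  have hdp : ∀ t ∈ Icc (-ϖ n) 0,
      doublePrimitive (fun w => max (β n w) (g w)) (-ϖ n) t = (t + ϖ n) ^ 2 / 2 := fun t ht => by
    rw [doublePrimitive_of_eqOn_one (fun w hw => hn w (hw.2.trans ht.2)) ht.1, sub_neg_eq_add]
  obtain ⟨⟨hpos, hone⟩, -, hformula⟩ := h.2 n
  have hϖ : ϖ n = Real.sqrt 2 := by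
    have := hdp 0 ⟨by linarith, le_rfl⟩
    change doublePrimitive _ _ _ = 1 at hone
    rw [hone, zero_add] at this
    rw [← Real.sqrt_sq hpos.le]
    congr 1
    linarith
  refine ⟨hϖ, fun t ht => ?_⟩
  rw [← hϖ] at ht ⊢
  rw [hformula t ht.1 ht.2]
  exact congrArg (1 - ·) (hdp t ht)

lemma max_eq_one (h : IsBetaSeq g β ϖ) (hg : ∀ w, g w ≤ 1)
    (hg1 : ∀ w ∈ Icc (-Real.sqrt 2) 0, g w = 1) : ∀ n, ∀ w ≤ 0, max (β n w) (g w) = 1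
  | 0 => fun w hw => by rw [h.1 w hw, max_eq_left (hg w)]
  | n + 1 => fun w hw => by
    obtain ⟨hϖ, hformula⟩ := h.varpi_eq_of_max_eq_one (h.max_eq_one hg hg1 n)
    rcases le_total w (-Real.sqrt 2) with hws | hws
    · rw [(h.2 n).2.1 w (hϖ ▸ hws), max_eq_left (hg w)]
    · rw [hformula w ⟨hws, hw⟩, hg1 w ⟨hws, hw⟩, max_eq_right]
      linarith [sq_nonneg (w + Real.sqrt 2)]

theorem limits_of_le_one (h : IsBetaSeq g β ϖ) (hg : ∀ w, g w ≤ 1)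
    (hg1 : ∀ w ∈ Icc (-Real.sqrt 2) 0, g w = 1) {Ψ : ℝ} {y : ℝ → ℝ}
    (hϖ : Tendsto ϖ atTop (𝓝 Ψ)) (hy : ∀ t, Tendsto (fun n => β n t) atTop (𝓝 (y t))) :
    Ψ = Real.sqrt 2 ∧ ∀ w ∈ Icc (-Real.sqrt 2) 0, y w = 1 - (w + Real.sqrt 2) ^ 2 / 2 := by
  have hstep := fun n => h.varpi_eq_of_max_eq_one (h.max_eq_one hg hg1 n)
  refine ⟨tendsto_nhds_unique hϖ (tendsto_const_nhds.congr fun n => (hstep n).1.symm),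
    fun w hw => tendsto_nhds_unique ((hy w).comp (tendsto_add_atTop_nat 1))
      (tendsto_const_nhds.congr fun n => ((hstep n).2 w hw).symm)⟩

end IsBetaSeq

/-- `Ψ(ρ,0) = π/2`, and for `Δ ≥ 2√2`, `Ψ(1,Δ) = √2` with
`y_{1,Δ}(w) = 1 − (w+√2)²/2` on `[−√2, 0]`. -/
theorem psi_special_values
    (r : ℝ → ℝ → ℝ) (θ : ℝ → ℝ)
    (hr : ∀ Δ, 0 ≤ Δ → IsDelayCosine Δ (r Δ) ∧ IsFirstZero (r Δ) (θ Δ)) :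
    (∀ ρ : ℝ, 0 < ρ → ∀ (β : ℕ → ℝ → ℝ) (ϖ : ℕ → ℝ) (Ψ : ℝ),
      IsBetaSeq (gAux ρ 0 (θ 0) (r 0)) β ϖ →
      Filter.Tendsto ϖ Filter.atTop (nhds Ψ) → Ψ = Real.pi / 2) ∧
    (∀ Δ : ℝ, 2 * Real.sqrt 2 ≤ Δ →
      ∀ (β : ℕ → ℝ → ℝ) (ϖ : ℕ → ℝ) (Ψ : ℝ) (y : ℝ → ℝ),
      IsBetaSeq (gAux 1 Δ (θ Δ) (r Δ)) β ϖ →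
      Filter.Tendsto ϖ Filter.atTop (nhds Ψ) →
      (∀ t, Filter.Tendsto (fun n => β n t) Filter.atTop (nhds (y t))) →
      Ψ = Real.sqrt 2 ∧
      ∀ w ∈ Set.Icc (-Real.sqrt 2) (0:ℝ), y w = 1 - (w + Real.sqrt 2) ^ 2 / 2) := by
  refine ⟨fun ρ _ β ϖ Ψ hβ hϖ => ?_, fun Δ hΔ β ϖ Ψ y hβ hϖ hy => ?_⟩
  · rw [gAux_zero_delay (hr 0 le_rfl).2.2.1] at hβ
    exact hβ.eq_pi_div_two_of_tendsto hϖ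
  · have hs : 0 ≤ Real.sqrt 2 := Real.sqrt_nonneg 2
    obtain ⟨hrΔ, hθΔ⟩ := hr Δ (by linarith)
    have hθ : θ Δ = Real.sqrt 2 := hrΔ.firstZero_eq_sqrt_two hθΔ (by linarith)
    refine hβ.limits_of_le_one (gAux_one_le_one hrΔ (by linarith)) (fun w hw => ?_) hϖ hy
    exact gAux_one_eq_one hrΔ (by linarith) ⟨by linarith [hw.1], hw.2⟩
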